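/- Let κ be a coloring of the m×n array for which there is a partition of the rows into s classes R_1, …, R_s and a partition of the columns into t classes C_1, …, C_t such that each block R_a × C_b is a Latin rectangle under κ and distinct blocks use disjoint sets of colors. Let n_{ab} denote the number of distinct colors used on block R_a × C_b. Then the real vector space Δ_κ ∩ V_d has dimension Σ_{a,b} n_{ab} − s − t + 1. -/

import Mathlib

/-!
Restrict `z ↦ (row sums of z, column sums of z)` to `Δ_κ`; its kernel is `Δ_κ ∩ V_d`. Since every
block is a Latin rectangle, a matrix constant on colors has equal row sums on each row class and
equal column sums on each column class, so the image consists of pairs `(u ∘ R, v ∘ C)` with equal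
totals `S`. Conversely every such pair is attained, by `z i j = u (R i) / n + v (C j) / m - S / (m n)`,
which is constant on colors because colors do not cross blocks. Hence the image has dimension
`s + t - 1`, while `dim Δ_κ` is the number of colors, which is `Σ n_ab` by disjointness.
-/

open Finset

/-- `V_d`: matrices all of whose row sums and all of whose column sums are `0`. -/
def Vd (m n : ℕ) : Submodule ℝ (Fin m → Fin n → ℝ) where
  carrier := {z | (∀ i, ∑ j, z i j = 0) ∧ (∀ j, ∑ i, z i j = 0)}
  add_mem' := by
    rintro a b ⟨ha1, ha2⟩ ⟨hb1, hb2⟩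
    constructor
    · intro i
      simp only [Pi.add_apply, Finset.sum_add_distrib, ha1 i, hb1 i, add_zero]
    · intro j
      simp only [Pi.add_apply, Finset.sum_add_distrib, ha2 j, hb2 j, add_zero]
  zero_mem' := by constructor <;> intro _ <;> simp
  smul_mem' := by
    rintro c a ⟨h1, h2⟩
    constructor
    · intro i
      simp only [Pi.smul_apply, smul_eq_mul, ← Finset.mul_sum, h1 i, mul_zero]
    · intro j
      simp only [Pi.smul_apply, smul_eq_mul, ← Finset.mul_sum, h2 j, mul_zero]

/-- The synchrony subspace `Δ_κ` of a coloring `κ`, as a submodule: matrices constant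
on each color class. -/
def synchronyMod {m n : ℕ} {X : Type*} (κ : Fin m → Fin n → X) :
    Submodule ℝ (Fin m → Fin n → ℝ) where
  carrier := {z | ∀ i j k l, κ i j = κ k l → z i j = z k l}
  add_mem' := by
    intro a b ha hb i j k l h
    simp only [Pi.add_apply]
    rw [ha i j k l h, hb i j k l h]
  zero_mem' := by intro i j k l _; rfl
  smul_mem' := by
    intro c a ha i j k l h
    simp only [Pi.smul_apply, smul_eq_mul]
    rw [ha i j k l h]

theorem sum_comp_eq_of_card_filter_eq {ι X M : Type*} [Fintype ι] [DecidableEq X]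
    [AddCommMonoid M] {g g' : ι → X} (h : ∀ c, #{j | g j = c} = #{j | g' j = c}) (f : X → M) :
    ∑ j, f (g j) = ∑ j, f (g' j) := by
  have hmap : univ.val.map g = univ.val.map g' := by
    ext c
    simpa [Multiset.count_map, eq_comm, Finset.card_def, Finset.filter_val] using h c
  simpa only [sum_eq_multiset_sum, Multiset.map_map, Function.comp_def] using
    congrArg (fun u => (u.map f).sum) hmap

theorem card_image_eq_sum_card_image_filter {ι X β : Type*} [DecidableEq X] [Fintype β]
    [DecidableEq β] (s : Finset ι) (f : ι → X) (g : ι → β)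
    (hfg : ∀ x ∈ s, ∀ y ∈ s, f x = f y → g x = g y) :
    #(s.image f) = ∑ b, #({x ∈ s | g x = b}.image f) := by
  classical
  conv_lhs => rw [← biUnion_filter_eq_of_maps_to (s := s) (t := univ) (fun x _ => mem_univ (g x))]
  rw [biUnion_image, card_biUnion]
  intro b _ b' _ hne
  simp only [Function.onFun, disjoint_left, mem_image, mem_filter]
  rintro _ ⟨x, ⟨hx, rfl⟩, rfl⟩ ⟨y, ⟨hy, rfl⟩, hxy⟩
  exact hne (hfg x hx y hy hxy.symm)

section Coloring

variable {m n : ℕ} {X : Type*}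

theorem exists_eq_comp_of_mem_synchronyMod {κ : Fin m → Fin n → X}
    {z : Fin m → Fin n → ℝ} (hz : z ∈ synchronyMod κ) :
    ∃ f : X → ℝ, ∀ i j, z i j = f (κ i j) := by
  have hfac : (Function.uncurry z).FactorsThrough (Function.uncurry κ) :=
    fun p q h => hz p.1 p.2 q.1 q.2 h
  exact ⟨Function.extend (Function.uncurry κ) (Function.uncurry z) 0,
    fun i j => (hfac.extend_apply 0 (i, j)).symm⟩

section Colors

variable [DecidableEq X] (κ : Fin m → Fin n → X)

def colors : Finset X :=
  (univ ×ˢ univ : Finset (Fin m × Fin n)).image fun p => κ p.1 p.2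

theorem mem_colors (i : Fin m) (j : Fin n) : κ i j ∈ colors κ :=
  mem_image.2 ⟨(i, j), by simp, rfl⟩

def colorLift : (colors κ → ℝ) →ₗ[ℝ] (Fin m → Fin n → ℝ) where
  toFun x i j := x ⟨κ i j, mem_colors κ i j⟩
  map_add' _ _ := rfl
  map_smul' _ _ := rfl

theorem colorLift_injective : Function.Injective (colorLift κ) := by
  intro x y hxy
  funext ⟨c, hc⟩
  obtain ⟨p, -, rfl⟩ := mem_image.1 hc
  exact congrFun (congrFun hxy p.1) p.2

theorem range_colorLift : LinearMap.range (colorLift κ) = synchronyMod κ := by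
  apply le_antisymm
  · rintro _ ⟨x, rfl⟩ i j k l h
    exact congrArg x (Subtype.ext h)
  · intro z hz
    obtain ⟨f, hf⟩ := exists_eq_comp_of_mem_synchronyMod hz
    exact ⟨fun c => f c, funext fun i => funext fun j => (hf i j).symm⟩

theorem finrank_synchronyMod : Module.finrank ℝ (synchronyMod κ) = #(colors κ) := by
  rw [← range_colorLift, LinearMap.finrank_range_of_inj (colorLift_injective κ),
    Module.finrank_fintype_fun_eq_card, Fintype.card_coe]

end Colors

section Blocks

variable [DecidableEq X] {s t : ℕ} (R : Fin m → Fin s) (C : Fin n → Fin t)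

theorem card_colors_eq_sum_card_block (κ : Fin m → Fin n → X)
    (hdisj : ∀ (i k : Fin m) (j l : Fin n), κ i j = κ k l → R i = R k ∧ C j = C l) :
    #(colors κ) = ∑ a : Fin s, ∑ b : Fin t,
      #({p ∈ (univ ×ˢ univ : Finset (Fin m × Fin n)) | R p.1 = a ∧ C p.2 = b}.image
        fun p => κ p.1 p.2) := by
  rw [colors, card_image_eq_sum_card_image_filter _ _ (fun p => (R p.1, C p.2))
    fun p _ q _ h => Prod.ext_iff.2 (hdisj p.1 q.1 p.2 q.2 h), Fintype.sum_prod_type]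
  simp only [Prod.mk.injEq]

end Blocks

section AxialSums

variable (m n) in
def rowColSums : (Fin m → Fin n → ℝ) →ₗ[ℝ] (Fin m → ℝ) × (Fin n → ℝ) where
  toFun z := (fun i => ∑ j, z i j, fun j => ∑ i, z i j)
  map_add' z w := by ext <;> simp [sum_add_distrib]
  map_smul' c z := by ext <;> simp [mul_sum]

theorem ker_rowColSums : LinearMap.ker (rowColSums m n) = Vd m n := by
  ext z
  simp [rowColSums, Vd, funext_iff]

variable (m n) in
def totalDiff : (Fin m → ℝ) × (Fin n → ℝ) →ₗ[ℝ] ℝ where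
  toFun rc := ∑ i, rc.1 i - ∑ j, rc.2 j
  map_add' _ _ := by simp only [Prod.fst_add, Prod.snd_add, Pi.add_apply, sum_add_distrib]; ring
  map_smul' _ _ := by simp [mul_sum, mul_sub]

theorem totalDiff_rowColSums (z : Fin m → Fin n → ℝ) : totalDiff m n (rowColSums m n z) = 0 := by
  simp [totalDiff, rowColSums, sum_comm (γ := Fin m)]

variable {s t : ℕ} (R : Fin m → Fin s) (C : Fin n → Fin t)

def blockLift : (Fin s → ℝ) × (Fin t → ℝ) →ₗ[ℝ] (Fin m → ℝ) × (Fin n → ℝ) :=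
  (LinearMap.funLeft ℝ ℝ R).prodMap (LinearMap.funLeft ℝ ℝ C)

theorem blockLift_injective (hR : Function.Surjective R) (hC : Function.Surjective C) :
    Function.Injective (blockLift R C) :=
  Prod.map_injective.2 ⟨LinearMap.funLeft_injective_of_surjective ℝ ℝ R hR,
    LinearMap.funLeft_injective_of_surjective ℝ ℝ C hC⟩

theorem finrank_ker_totalDiff_comp_blockLift (hm : 1 ≤ m) :
    Module.finrank ℝ (LinearMap.ker (totalDiff m n ∘ₗ blockLift R C)) + 1 = s + t := by
  have hsurj : Function.Surjective (totalDiff m n ∘ₗ blockLift R C) := fun r =>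
    ⟨(fun _ => r / m, 0), by
      simp [totalDiff, blockLift, mul_div_cancel₀, show (m : ℝ) ≠ 0 by positivity]⟩
  have := LinearMap.finrank_range_add_finrank_ker (totalDiff m n ∘ₗ blockLift R C)
  rw [LinearMap.range_eq_top.2 hsurj, finrank_top, Module.finrank_self, Module.finrank_prod,
    Module.finrank_fin_fun, Module.finrank_fin_fun] at this
  omega

end AxialSums

section Latin

variable [DecidableEq X] {s t : ℕ} {R : Fin m → Fin s} {C : Fin n → Fin t}
  {κ : Fin m → Fin n → X} {z : Fin m → Fin n → ℝ}

theorem sum_row_eq_of_card_block_eq (hz : z ∈ synchronyMod κ) {i i' : Fin m}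
    (h : ∀ b c, #{j | C j = b ∧ κ i j = c} = #{j | C j = b ∧ κ i' j = c}) :
    ∑ j, z i j = ∑ j, z i' j := by
  obtain ⟨f, hf⟩ := exists_eq_comp_of_mem_synchronyMod hz
  simp only [hf]
  exact sum_comp_eq_of_card_filter_eq (g := fun j => (C j, κ i j)) (g' := fun j => (C j, κ i' j))
    (fun bc => by simpa only [Prod.ext_iff] using h bc.1 bc.2) (fun bc => f bc.2)

theorem sum_col_eq_of_card_block_eq (hz : z ∈ synchronyMod κ) {j j' : Fin n}
    (h : ∀ a c, #{i | R i = a ∧ κ i j = c} = #{i | R i = a ∧ κ i j' = c}) :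
    ∑ i, z i j = ∑ i, z i j' := by
  obtain ⟨f, hf⟩ := exists_eq_comp_of_mem_synchronyMod hz
  simp only [hf]
  exact sum_comp_eq_of_card_filter_eq (g := fun i => (R i, κ i j)) (g' := fun i => (R i, κ i j'))
    (fun ac => by simpa only [Prod.ext_iff] using h ac.1 ac.2) (fun ac => f ac.2)

theorem rowColSums_mem_map_blockLift
    (hrow : ∀ i i', R i = R i' → ∀ b c,
      #{j | C j = b ∧ κ i j = c} = #{j | C j = b ∧ κ i' j = c})
    (hcol : ∀ j j', C j = C j' → ∀ a c,
      #{i | R i = a ∧ κ i j = c} = #{i | R i = a ∧ κ i j' = c})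
    (hz : z ∈ synchronyMod κ) :
    rowColSums m n z ∈ (LinearMap.ker (totalDiff m n ∘ₗ blockLift R C)).map (blockLift R C) := by
  have hrowFac : (fun i => ∑ j, z i j).FactorsThrough R :=
    fun i i' h => sum_row_eq_of_card_block_eq hz (hrow i i' h)
  have hcolFac : (fun j => ∑ i, z i j).FactorsThrough C :=
    fun j j' h => sum_col_eq_of_card_block_eq hz (hcol j j' h)
  have hlift : blockLift R C (Function.extend R (fun i => ∑ j, z i j) 0,
      Function.extend C (fun j => ∑ i, z i j) 0) = rowColSums m n z :=
    Prod.ext (funext (hrowFac.extend_apply 0)) (funext (hcolFac.extend_apply 0))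
  refine ⟨_, ?_, hlift⟩
  show totalDiff m n (blockLift R C _) = 0
  rw [hlift, totalDiff_rowColSums]

end Latin

section Realization

variable {s t : ℕ} {R : Fin m → Fin s} {C : Fin n → Fin t}

theorem exists_mem_synchronyMod_rowColSums_eq (hm : 1 ≤ m) (hn : 1 ≤ n)
    {κ : Fin m → Fin n → X}
    (hdisj : ∀ (i k : Fin m) (j l : Fin n), κ i j = κ k l → R i = R k ∧ C j = C l)
    {uv : (Fin s → ℝ) × (Fin t → ℝ)} (huv : uv ∈ LinearMap.ker (totalDiff m n ∘ₗ blockLift R C)) :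
    ∃ z ∈ synchronyMod κ, rowColSums m n z = blockLift R C uv := by
  obtain ⟨u, v⟩ := uv
  set S := ∑ i, u (R i)
  have hS : ∑ j, v (C j) = S := (sub_eq_zero.1 huv).symm
  have hm' : (m : ℝ) ≠ 0 := by positivity
  have hn' : (n : ℝ) ≠ 0 := by positivity
  refine ⟨fun i j => u (R i) / n + v (C j) / m - S / (m * n), ?_, ?_⟩
  · intro i j k l h
    obtain ⟨hik, hjl⟩ := hdisj i k j l h
    simp only [hik, hjl]
  · ext <;>
    simp only [rowColSums, blockLift, LinearMap.coe_mk, AddHom.coe_mk, LinearMap.prodMap_apply,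
      LinearMap.funLeft_apply, sum_sub_distrib, sum_add_distrib, sum_const, card_univ,
      Fintype.card_fin, nsmul_eq_mul, ← sum_div, hS] <;>
    field_simp <;> ring

end Realization

theorem range_rowColSums_domRestrict [DecidableEq X] {s t : ℕ} (hm : 1 ≤ m) (hn : 1 ≤ n)
    {κ : Fin m → Fin n → X} {R : Fin m → Fin s} {C : Fin n → Fin t}
    (hrow : ∀ i i', R i = R i' → ∀ b c,
      #{j | C j = b ∧ κ i j = c} = #{j | C j = b ∧ κ i' j = c})
    (hcol : ∀ j j', C j = C j' → ∀ a c,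
      #{i | R i = a ∧ κ i j = c} = #{i | R i = a ∧ κ i j' = c})
    (hdisj : ∀ (i k : Fin m) (j l : Fin n), κ i j = κ k l → R i = R k ∧ C j = C l) :
    LinearMap.range ((rowColSums m n).domRestrict (synchronyMod κ)) =
      (LinearMap.ker (totalDiff m n ∘ₗ blockLift R C)).map (blockLift R C) := by
  apply le_antisymm
  · rintro _ ⟨⟨z, hz⟩, rfl⟩
    exact rowColSums_mem_map_blockLift hrow hcol hz
  · rintro _ ⟨uv, huv, rfl⟩
    obtain ⟨z, hz, hzuv⟩ := exists_mem_synchronyMod_rowColSums_eq hm hn hdisj huv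
    exact ⟨⟨z, hz⟩, hzuv⟩

end Coloring

/-- if `κ` decomposes into Latin-rectangle blocks (given by partitions of
rows into `s` classes and columns into `t` classes) with pairwise disjoint color sets,
and `n_{ab}` is the number of distinct colors on block `(a,b)`, then
`dim (Δ_κ ∩ V_d) = Σ_{a,b} n_{ab} − s − t + 1`. -/
theorem dimension_of_axial_intersection (m n : ℕ) (hm : 1 ≤ m) (hn : 1 ≤ n)
    {X : Type*} [DecidableEq X] (κ : Fin m → Fin n → X)
    (s t : ℕ) (R : Fin m → Fin s) (C : Fin n → Fin t)
    (hR : Function.Surjective R) (hC : Function.Surjective C)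
    (hrow : ∀ (a : Fin s) (b : Fin t) (i i' : Fin m), R i = a → R i' = a → ∀ c : X,
      ((Finset.univ.filter (fun j => C j = b ∧ κ i j = c)).card =
        (Finset.univ.filter (fun j => C j = b ∧ κ i' j = c)).card))
    (hcol : ∀ (a : Fin s) (b : Fin t) (j j' : Fin n), C j = b → C j' = b → ∀ c : X,
      ((Finset.univ.filter (fun i => R i = a ∧ κ i j = c)).card =
        (Finset.univ.filter (fun i => R i = a ∧ κ i j' = c)).card))
    (hdisj : ∀ (i k : Fin m) (j l : Fin n), κ i j = κ k l → R i = R k ∧ C j = C l) :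
    Module.finrank ℝ (synchronyMod κ ⊓ Vd m n : Submodule ℝ (Fin m → Fin n → ℝ)) + s + t =
      (∑ a : Fin s, ∑ b : Fin t,
        (((Finset.univ ×ˢ Finset.univ : Finset (Fin m × Fin n)).filter
            (fun p => R p.1 = a ∧ C p.2 = b)).image (fun p => κ p.1 p.2)).card) + 1 := by
  set f := (rowColSums m n).domRestrict (synchronyMod κ)
  have hker : Module.finrank ℝ (LinearMap.ker f) =
      Module.finrank ℝ (synchronyMod κ ⊓ Vd m n : Submodule ℝ (Fin m → Fin n → ℝ)) := by
    rw [LinearMap.ker_domRestrict, ker_rowColSums, ← Submodule.finrank_map_subtype_eq,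
      Submodule.map_comap_subtype]
  have hrange : Module.finrank ℝ (LinearMap.range f) + 1 = s + t := by
    rw [range_rowColSums_domRestrict hm hn (fun i i' h b c => hrow _ b i i' h rfl c)
      (fun j j' h a c => hcol a _ j j' h rfl c) hdisj,
      ← (Submodule.equivMapOfInjective _ (blockLift_injective R C hR hC) _).finrank_eq]
    exact finrank_ker_totalDiff_comp_blockLift R C hm
  have hdim := LinearMap.finrank_range_add_finrank_ker f
  rw [finrank_synchronyMod, card_colors_eq_sum_card_block R C κ hdisj] at hdim
  omega
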